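/- Let a ∈ ℝ₊ⁿ be nonzero with B(a) a = a. Then a is in the core: there is no nonempty coalition S ⊆ {1,…,n} and action profile a' ∈ ℝ₊ⁿ with a'_j = 0 for all j ∉ S such that u_i(a') ≥ u_i(a) for all i ∈ S and u_i(a') > u_i(a) for some i ∈ S. -/

import Mathlib

/-!
Centrality `B(a) a = a` says exactly that `J(a) a = 0`, so by concavity a deviation `a'` gains
agent `i` at most `(J(a) a')_i`. Hence every coalition member has `a'_i ≤ (B(a) a')_i`, strictly
for a member who is strictly better off, and outsiders have it trivially since `a'_i = 0`.
Irreducibility makes the fixed vector `a` of `B(a)` strictly positive. With `s = max_i a'_i / a_i`,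
the vector `s a - a'` is nonnegative, subinvariant under `B(a)` and vanishes somewhere, so by
irreducibility it vanishes everywhere; then `a' = s a` is fixed by `B(a)`, contradicting the strict
inequality.
-/

open Matrix

/-- The spectral radius of a real square matrix: the largest modulus of a
(complex) eigenvalue, i.e. of an element of the spectrum of the matrix viewed
over `ℂ`. -/
noncomputable def specRad {n : ℕ} (M : Matrix (Fin n) (Fin n) ℝ) : ℝ :=
  sSup ((fun z : ℂ => ‖z‖) '' spectrum ℂ (M.map (Complex.ofReal : ℝ → ℂ)))

/-- The nonnegative orthant `ℝ₊ⁿ`, the domain of action profiles. -/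
def nonnegOrthant (n : ℕ) : Set (Fin n → ℝ) := {x | ∀ i, 0 ≤ x i}

/-- The Jacobian matrix of the utility profile `u` at `a`:
`Jmat u a i j = ∂u_i/∂a_j (a)`. -/
noncomputable def Jmat {n : ℕ} (u : Fin n → (Fin n → ℝ) → ℝ) (a : Fin n → ℝ) :
    Matrix (Fin n) (Fin n) ℝ :=
  Matrix.of fun i j => fderiv ℝ (u i) a (Pi.single j 1)

/-- The benefits matrix `B(a)`: `B_ij = J_ij / (-J_ii)` off the diagonal and
`B_ii = 0`. -/
noncomputable def Bmat {n : ℕ} (u : Fin n → (Fin n → ℝ) → ℝ) (a : Fin n → ℝ) :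
    Matrix (Fin n) (Fin n) ℝ :=
  Matrix.of fun i j => if i = j then 0 else Jmat u a i j / (- Jmat u a i i)

/-- A nonnegative matrix is irreducible when every pair of indices is
connected by some power of the matrix. -/
def MatIrreducible {n : ℕ} (M : Matrix (Fin n) (Fin n) ℝ) : Prop :=
  ∀ i j, ∃ k : ℕ, 1 ≤ k ∧ 0 < (M ^ k) i j

/-- `a` can be Pareto improved upon within the nonnegative orthant. -/
def ParetoImprovable {n : ℕ} (u : Fin n → (Fin n → ℝ) → ℝ) (a : Fin n → ℝ) : Prop :=
  ∃ a' : Fin n → ℝ, (∀ i, 0 ≤ a' i) ∧ (∀ i, u i a ≤ u i a') ∧ ∃ i, u i a < u i a'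

namespace Matrix

variable {ι : Type*} [Fintype ι]

theorem mulVec_mono_of_nonneg {M : Matrix ι ι ℝ} (hM : ∀ i j, 0 ≤ M i j) {v w : ι → ℝ}
    (hvw : v ≤ w) : M *ᵥ v ≤ M *ᵥ w :=
  fun i => Finset.sum_le_sum fun j _ => mul_le_mul_of_nonneg_left (hvw j) (hM i j)

theorem mulVec_nonneg_of_nonneg {M : Matrix ι ι ℝ} (hM : ∀ i j, 0 ≤ M i j) {v : ι → ℝ}
    (hv : 0 ≤ v) : 0 ≤ M *ᵥ v := by
  simpa using mulVec_mono_of_nonneg hM hv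

variable [DecidableEq ι]

theorem pow_apply_nonneg_of_nonneg {M : Matrix ι ι ℝ} (hM : ∀ i j, 0 ≤ M i j) (k : ℕ)
    (i j : ι) : 0 ≤ (M ^ k) i j := by
  induction k generalizing i j with
  | zero => by_cases h : i = j <;> simp [h]
  | succ k ih =>
    rw [pow_succ, mul_apply]
    exact Finset.sum_nonneg fun l _ => mul_nonneg (ih i l) (hM l j)

theorem pow_mulVec_le_of_mulVec_le {M : Matrix ι ι ℝ} (hM : ∀ i j, 0 ≤ M i j) {c : ι → ℝ}
    (hc : M *ᵥ c ≤ c) (k : ℕ) : M ^ k *ᵥ c ≤ c := by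
  induction k with
  | zero => simp
  | succ k ih =>
    rw [pow_succ', ← mulVec_mulVec]
    exact (mulVec_mono_of_nonneg hM ih).trans hc

end Matrix

namespace MatIrreducible

variable {n : ℕ} {M : Matrix (Fin n) (Fin n) ℝ}

theorem pos_of_mulVec_le (hirr : MatIrreducible M) (hM : ∀ i j, 0 ≤ M i j) {c : Fin n → ℝ}
    (hc : 0 ≤ c) (hMc : M *ᵥ c ≤ c) {j : Fin n} (hj : 0 < c j) (i : Fin n) : 0 < c i := by
  obtain ⟨k, -, hk⟩ := hirr i j
  calc 0 < (M ^ k) i j * c j := mul_pos hk hj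
    _ ≤ (M ^ k *ᵥ c) i :=
      Finset.single_le_sum (f := fun l => (M ^ k) i l * c l)
        (fun l _ => mul_nonneg (pow_apply_nonneg_of_nonneg hM k i l) (hc l)) (Finset.mem_univ j)
    _ ≤ c i := pow_mulVec_le_of_mulVec_le hM hMc k i

theorem mulVec_eq_of_le_mulVec (hirr : MatIrreducible M) (hM : ∀ i j, 0 ≤ M i j)
    {a : Fin n → ℝ} (ha : 0 ≤ a) (ha0 : a ≠ 0) (hMa : M *ᵥ a = a)
    {v : Fin n → ℝ} (hv : v ≤ M *ᵥ v) : M *ᵥ v = v := by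
  obtain ⟨j, hj⟩ : ∃ j, 0 < a j := by
    by_contra! h
    exact ha0 (le_antisymm h ha)
  have hapos : ∀ i, 0 < a i := hirr.pos_of_mulVec_le hM ha hMa.le hj
  have : Nonempty (Fin n) := ⟨j⟩
  obtain ⟨k, -, hk⟩ :=
    Finset.exists_max_image Finset.univ (fun i => v i / a i) Finset.univ_nonempty
  set s := v k / a k
  have hc : 0 ≤ s • a - v := fun i => by
    have := (div_le_iff₀ (hapos i)).mp (hk i (Finset.mem_univ i))
    simp only [Pi.zero_apply, Pi.sub_apply, Pi.smul_apply, smul_eq_mul]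
    linarith
  have hMc : M *ᵥ (s • a - v) ≤ s • a - v := by
    rw [mulVec_sub, mulVec_smul, hMa]
    exact sub_le_sub_left hv _
  have hck : (s • a - v) k = 0 := by
    simp [s, div_mul_cancel₀ _ (hapos k).ne']
  have hc0 : s • a - v = 0 := by
    funext i
    by_contra h
    have := hirr.pos_of_mulVec_le hM hc hMc (lt_of_le_of_ne (hc i) (Ne.symm h)) k
    linarith
  rw [(sub_eq_zero.mp hc0).symm, mulVec_smul, hMa]

end MatIrreducible

theorem ConcaveOn.le_add_fderiv {E : Type*} [NormedAddCommGroup E] [NormedSpace ℝ E]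
    {s : Set E} {f : E → ℝ} (hf : ConcaveOn ℝ s f) {x y : E}
    (hx : x ∈ s) (hy : y ∈ s) (hd : DifferentiableAt ℝ f x) :
    f y ≤ f x + fderiv ℝ f x (y - x) := by
  set L : ℝ →ᵃ[ℝ] E := AffineMap.lineMap x y
  have hL0 : L 0 = x := AffineMap.lineMap_apply_zero x y
  have hL1 : L 1 = y := AffineMap.lineMap_apply_one x y
  have hderiv : HasDerivAt (f ∘ L) (fderiv ℝ f x (y - x)) 0 := by
    have hfx : HasFDerivAt f (fderiv ℝ f x) (L 0) := hL0 ▸ hd.hasFDerivAt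
    exact hfx.comp_hasDerivAt 0 AffineMap.hasDerivAt_lineMap
  have hslope := (hf.comp_affineMap L).slope_le_of_hasDerivAt (by simpa [hL0] using hx)
    (by simpa [hL1] using hy) zero_lt_one hderiv
  rw [slope_def_field] at hslope
  simp only [Function.comp_apply, hL0, hL1, sub_zero, div_one] at hslope
  linarith

theorem fderiv_apply_eq_Jmat_mulVec {n : ℕ} (u : Fin n → (Fin n → ℝ) → ℝ) (a v : Fin n → ℝ)
    (i : Fin n) : fderiv ℝ (u i) a v = (Jmat u a *ᵥ v) i := by
  conv_lhs => rw [← Finset.univ_sum_single v]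
  simp only [map_sum, mulVec, dotProduct, Jmat, of_apply]
  refine Finset.sum_congr rfl fun j _ => ?_
  have hsingle : Pi.single j (v j) = v j • Pi.single j (1 : ℝ) := by
    rw [← Pi.single_smul', smul_eq_mul, mul_one]
  rw [hsingle, map_smul, smul_eq_mul, mul_comm]

section Benefits

variable {n : ℕ} {u : Fin n → (Fin n → ℝ) → ℝ} {a : Fin n → ℝ}

theorem Bmat_nonneg (hJ : ∀ i, Jmat u a i i < 0) (hJ' : ∀ i j, i ≠ j → 0 ≤ Jmat u a i j)
    (i j : Fin n) : 0 ≤ Bmat u a i j := by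
  by_cases h : i = j
  · simp [Bmat, h]
  · simpa [Bmat, h] using div_nonneg (hJ' i j h) (neg_nonneg.mpr (hJ i).le)

theorem Bmat_mulVec_apply {i : Fin n} (hi : Jmat u a i i ≠ 0) (v : Fin n → ℝ) :
    (Bmat u a *ᵥ v) i = v i + (Jmat u a *ᵥ v) i / -Jmat u a i i := by
  have hrow : ∀ j, Bmat u a i j = Jmat u a i j / -Jmat u a i i + if i = j then 1 else 0 := by
    intro j
    by_cases h : i = j
    · subst h; simp [Bmat, hi]
    · simp [Bmat, h]
  simp only [mulVec, dotProduct, hrow, add_mul, Finset.sum_add_distrib, Finset.sum_div, ite_mul]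
  simp [mul_div_assoc', mul_comm, add_comm]

theorem Bmat_mulVec_apply_eq_iff {i : Fin n} (hi : Jmat u a i i ≠ 0) (v : Fin n → ℝ) :
    (Bmat u a *ᵥ v) i = v i ↔ (Jmat u a *ᵥ v) i = 0 := by
  rw [Bmat_mulVec_apply hi, add_eq_left, div_eq_zero_iff, neg_eq_zero, or_iff_left hi]

theorem le_Bmat_mulVec_apply_iff {i : Fin n} (hi : Jmat u a i i < 0) (v : Fin n → ℝ) :
    v i ≤ (Bmat u a *ᵥ v) i ↔ 0 ≤ (Jmat u a *ᵥ v) i := by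
  rw [Bmat_mulVec_apply hi.ne, le_add_iff_nonneg_right, le_div_iff₀ (neg_pos.mpr hi), zero_mul]

end Benefits

theorem stmt12_general {n : ℕ}
    (u : Fin n → (Fin n → ℝ) → ℝ)
    (hconc : ∀ i, ConcaveOn ℝ (nonnegOrthant n) (u i))
    (hdiff : ∀ i, ContDiff ℝ 1 (u i))
    (hCA : ∀ a ∈ nonnegOrthant n, ∀ i, Jmat u a i i < 0)
    (hPE : ∀ a ∈ nonnegOrthant n, ∀ i j, i ≠ j → 0 ≤ Jmat u a i j)
    (hirr : ∀ a ∈ nonnegOrthant n, MatIrreducible (Bmat u a))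
    (a : Fin n → ℝ) (hnn : ∀ i, 0 ≤ a i) (hne : a ≠ 0)
    (hcent : Bmat u a *ᵥ a = a) :
    ¬ ∃ (S : Finset (Fin n)) (a' : Fin n → ℝ),
        S.Nonempty ∧ (∀ i, 0 ≤ a' i) ∧ (∀ j ∉ S, a' j = 0) ∧
        (∀ i ∈ S, u i a ≤ u i a') ∧ ∃ i ∈ S, u i a < u i a' := by
  rintro ⟨S, a', -, ha'nn, ha'out, hweak, i₀, -, hstrict⟩
  have hJii := hCA a hnn
  have hBnn := Bmat_nonneg hJii (hPE a hnn)
  have hJa : ∀ i, (Jmat u a *ᵥ a) i = 0 := fun i =>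
    (Bmat_mulVec_apply_eq_iff (hJii i).ne a).mp (congrFun hcent i)
  have hgain : ∀ i, u i a' - u i a ≤ (Jmat u a *ᵥ a') i := fun i => by
    have := (hconc i).le_add_fderiv hnn ha'nn ((hdiff i).differentiable one_ne_zero a)
    rw [fderiv_apply_eq_Jmat_mulVec, mulVec_sub, Pi.sub_apply, hJa i, sub_zero] at this
    linarith
  have hsub : a' ≤ Bmat u a *ᵥ a' := fun i => by
    by_cases hi : i ∈ S
    · exact (le_Bmat_mulVec_apply_iff (hJii i) a').mpr (by linarith [hgain i, hweak i hi])
    · rw [ha'out i hi]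
      exact mulVec_nonneg_of_nonneg hBnn ha'nn i
  have hfix := (hirr a hnn).mulVec_eq_of_le_mulVec hBnn hnn hne hcent hsub
  have := (Bmat_mulVec_apply_eq_iff (hJii i₀).ne a').mp (congrFun hfix i₀)
  linarith [hgain i₀]

/-- A nonzero nonnegative profile with the centrality property is in the
core: no nonempty coalition `S` has a deviation (with outsiders' actions set
to `0`) making all members of `S` weakly better off and some member strictly
better off. -/
theorem stmt12 {n : ℕ} (hn : 1 ≤ n)
    (u : Fin n → (Fin n → ℝ) → ℝ)
    (hconc : ∀ i, ConcaveOn ℝ (nonnegOrthant n) (u i))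
    (hdiff : ∀ i, ContDiff ℝ 1 (u i))
    (hCA : ∀ a ∈ nonnegOrthant n, ∀ i, Jmat u a i i < 0)
    (hPE : ∀ a ∈ nonnegOrthant n, ∀ i j, i ≠ j → 0 ≤ Jmat u a i j)
    (hirr : ∀ a ∈ nonnegOrthant n, MatIrreducible (Bmat u a))
    (a : Fin n → ℝ) (hnn : ∀ i, 0 ≤ a i) (hne : a ≠ 0)
    (hcent : Bmat u a *ᵥ a = a) :
    ¬ ∃ (S : Finset (Fin n)) (a' : Fin n → ℝ),
        S.Nonempty ∧ (∀ i, 0 ≤ a' i) ∧ (∀ j ∉ S, a' j = 0) ∧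
        (∀ i ∈ S, u i a ≤ u i a') ∧ ∃ i ∈ S, u i a < u i a' :=
  stmt12_general u hconc hdiff hCA hPE hirr a hnn hne hcent
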